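/- Let H₁ and H₂ be Hilbert spaces over 𝕜 (𝕜 = ℝ or ℂ) with H₁ nontrivial, and let T : H₁ → H₂ be a bounded linear operator. If m_T is nonempty, then m_T is the unit sphere of some linear subspace of H₁; i.e., there exists a subspace M of H₁ such that m_T = {x ∈ M : ‖x‖ = 1}. -/

import Mathlib

/-! Since `m(T) ‖x‖ ≤ ‖T x‖`, the function `q x = ‖T x‖² - m(T)²‖x‖²` is nonnegative,
homogeneous of degree two and satisfies the parallelogram law, and `m_T` is the set of unit
vectors where it vanishes. The zero set of such a function is a subspace: if `q x = q y = 0`,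
then `q (x + y) + q (x - y) = 0` with both terms nonnegative. -/

/-- The minimum norm of a bounded linear operator. -/
noncomputable def minNorm {𝕜 X Y : Type*} [RCLike 𝕜] [NormedAddCommGroup X]
    [NormedSpace 𝕜 X] [NormedAddCommGroup Y] [NormedSpace 𝕜 Y] (T : X →L[𝕜] Y) : ℝ :=
  sInf {r : ℝ | ∃ x : X, ‖x‖ = 1 ∧ r = ‖T x‖}

def Submodule.ofParallelogramNull {𝕜 E : Type*} [NormedField 𝕜] [AddCommGroup E] [Module 𝕜 E]
    (q : E → ℝ) (nonneg : ∀ x, 0 ≤ q x)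
    (parallelogram : ∀ x y, q (x + y) + q (x - y) = 2 * (q x + q y))
    (smul : ∀ (c : 𝕜) x, q (c • x) = ‖c‖ ^ 2 * q x) : Submodule 𝕜 E where
  carrier := {x | q x = 0}
  zero_mem' := by simpa using smul 0 0
  add_mem' {x y} (hx : q x = 0) (hy : q y = 0) := show q (x + y) = 0 by
    linarith [parallelogram x y, nonneg (x + y), nonneg (x - y)]
  smul_mem' c x (hx : q x = 0) := show q (c • x) = 0 by rw [smul, hx, mul_zero]

section minNorm

variable {𝕜 X Y : Type*} [RCLike 𝕜] [NormedAddCommGroup X] [NormedSpace 𝕜 X]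
  [NormedAddCommGroup Y] [NormedSpace 𝕜 Y]

lemma minNorm_nonneg (T : X →L[𝕜] Y) : 0 ≤ minNorm T :=
  Real.sInf_nonneg fun _ ⟨_, _, hr⟩ ↦ hr ▸ norm_nonneg _

lemma minNorm_le_norm_apply (T : X →L[𝕜] Y) {x : X} (hx : ‖x‖ = 1) : minNorm T ≤ ‖T x‖ :=
  csInf_le ⟨0, fun _ ⟨_, _, hr⟩ ↦ hr ▸ norm_nonneg _⟩ ⟨x, hx, rfl⟩

lemma minNorm_mul_norm_le (T : X →L[𝕜] Y) (x : X) : minNorm T * ‖x‖ ≤ ‖T x‖ := by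
  rcases eq_or_ne x 0 with rfl | hx
  · simp
  have hx' : 0 < ‖x‖ := norm_pos_iff.mpr hx
  have h := minNorm_le_norm_apply T (norm_smul_inv_norm (𝕜 := 𝕜) hx)
  rw [map_smul, norm_smul, norm_inv, RCLike.norm_ofReal, abs_norm] at h
  rwa [← le_div_iff₀ hx', div_eq_inv_mul]

end minNorm

theorem stmt_9_general {𝕜 H₁ H₂ : Type*} [RCLike 𝕜]
    [NormedAddCommGroup H₁] [InnerProductSpace 𝕜 H₁]
    [NormedAddCommGroup H₂] [InnerProductSpace 𝕜 H₂]
    (T : H₁ →L[𝕜] H₂) :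
    ∃ M : Submodule 𝕜 H₁,
      {x : H₁ | ‖x‖ = 1 ∧ ‖T x‖ = minNorm T} = {x : H₁ | x ∈ M ∧ ‖x‖ = 1} := by
  set m := minNorm T
  let q : H₁ → ℝ := fun x ↦ ‖T x‖ ^ 2 - m ^ 2 * ‖x‖ ^ 2
  have nonneg (x : H₁) : 0 ≤ q x := sub_nonneg.mpr <| by
    rw [← mul_pow]
    exact pow_le_pow_left₀ (mul_nonneg (minNorm_nonneg T) (norm_nonneg x))
      (minNorm_mul_norm_le T x) 2
  have parallelogram (x y : H₁) : q (x + y) + q (x - y) = 2 * (q x + q y) := by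
    simp only [q, map_add, map_sub]
    linear_combination parallelogram_law_with_norm 𝕜 (T x) (T y)
      - m ^ 2 * parallelogram_law_with_norm 𝕜 x y
  have smul (c : 𝕜) (x : H₁) : q (c • x) = ‖c‖ ^ 2 * q x := by
    simp only [q, map_smul, norm_smul]; ring
  refine ⟨Submodule.ofParallelogramNull q nonneg parallelogram smul, Set.ext fun x ↦ ?_⟩
  change ‖x‖ = 1 ∧ ‖T x‖ = m ↔ q x = 0 ∧ ‖x‖ = 1
  constructor
  · rintro ⟨hx, hTx⟩
    exact ⟨by simp [q, hx, hTx], hx⟩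
  · rintro ⟨hqx, hx⟩
    refine ⟨hx, (sq_eq_sq₀ (norm_nonneg _) (minNorm_nonneg T)).mp ?_⟩
    simp only [q, hx] at hqx
    linarith

theorem stmt_9 {𝕜 H₁ H₂ : Type*} [RCLike 𝕜]
    [NormedAddCommGroup H₁] [InnerProductSpace 𝕜 H₁] [CompleteSpace H₁] [Nontrivial H₁]
    [NormedAddCommGroup H₂] [InnerProductSpace 𝕜 H₂] [CompleteSpace H₂]
    (T : H₁ →L[𝕜] H₂)
    (hne : {x : H₁ | ‖x‖ = 1 ∧ ‖T x‖ = minNorm T}.Nonempty) :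
    ∃ M : Submodule 𝕜 H₁,
      {x : H₁ | ‖x‖ = 1 ∧ ‖T x‖ = minNorm T} = {x : H₁ | x ∈ M ∧ ‖x‖ = 1} :=
  stmt_9_general T
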